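/- If a dimaze contains an alternating comb, then the set of vertices of out-degree 2 on the comb together with the exits of the dimaze not on the comb is a set that is linkable onto the exits but is not a maximal linkable set. -/

import Mathlib

open Set

universe u

variable {V : Type*}

/-- A directed path in the digraph `D`: a nonempty duplicate-free list of vertices
with an edge between consecutive vertices. -/
structure DiPath {V : Type*} (D : V → V → Prop) where
  verts : List V
  ne : verts ≠ []
  nodup : verts.Nodup
  chain : verts.Chain' D

namespace DiPath

variable {D : V → V → Prop}

/-- The initial vertex of a directed path. -/
def first (p : DiPath D) : V := p.verts.head p.ne

/-- The terminal vertex of a directed path. -/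
def last (p : DiPath D) : V := p.verts.getLast p.ne

/-- The set of vertices of a directed path. -/
def vertSet (p : DiPath D) : Set V := {v | v ∈ p.verts}

/-- The set of (directed) edges of a directed path. -/
def edgeSet (p : DiPath D) : Set (V × V) := {e | e ∈ p.verts.zip p.verts.tail}

end DiPath

/-- The set of initial vertices of a collection of paths. -/
def Ini {D : V → V → Prop} (P : Set (DiPath D)) : Set V := {v | ∃ p ∈ P, p.first = v}

/-- The set of terminal vertices of a collection of paths. -/
def Ter {D : V → V → Prop} (P : Set (DiPath D)) : Set V := {v | ∃ p ∈ P, p.last = v}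

/-- All vertices used by a collection of paths. -/
def LinkVerts {D : V → V → Prop} (P : Set (DiPath D)) : Set V := ⋃ p ∈ P, p.vertSet

/-- All edges used by a collection of paths. -/
def LinkEdges {D : V → V → Prop} (P : Set (DiPath D)) : Set (V × V) := ⋃ p ∈ P, p.edgeSet

/-- A linkage in the dimaze `(D, B0)`: a set of pairwise vertex-disjoint directed
paths, each ending in `B0`. -/
def IsLinkage (D : V → V → Prop) (B0 : Set V) (P : Set (DiPath D)) : Prop :=
  (∀ p ∈ P, p.last ∈ B0) ∧
  (∀ p ∈ P, ∀ q ∈ P, p ≠ q → Disjoint p.vertSet q.vertSet)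

/-- `(D, B0)` is a dimaze: every vertex of `B0` has out-degree `0`. -/
def IsDimaze (D : V → V → Prop) (B0 : Set V) : Prop := ∀ b ∈ B0, ∀ v, ¬ D b v

/-- A set of vertices is linkable if it is the set of initial vertices of a linkage. -/
def Linkable (D : V → V → Prop) (B0 : Set V) (I : Set V) : Prop :=
  ∃ P, IsLinkage D B0 P ∧ Ini P = I

/-- A set of vertices is linkable onto `B0` if it is the set of initial vertices of
a linkage whose terminal vertices are all of `B0`. -/
def LinkableOnto (D : V → V → Prop) (B0 : Set V) (I : Set V) : Prop :=
  ∃ P, IsLinkage D B0 P ∧ Ini P = I ∧ Ter P = B0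

/-- `I` is a maximal element (w.r.t. inclusion) of the set system `Ind`. -/
def MaximalIn {α : Type*} (Ind : Set α → Prop) (I : Set α) : Prop :=
  Ind I ∧ ∀ J, Ind J → I ⊆ J → J = I

/-- The maximality axiom (IM). -/
def SatisfiesIM {α : Type*} (Ind : Set α → Prop) : Prop :=
  ∀ I X : Set α, Ind I → I ⊆ X →
    ∃ J, Ind J ∧ I ⊆ J ∧ J ⊆ X ∧ ∀ K, Ind K → K ⊆ X → J ⊆ K → K = J

/-- `Ind` is the collection of independent sets of a matroid:
axioms (I1), (I2), (I3) and (IM). -/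
def IsMatroidIndep {α : Type*} (Ind : Set α → Prop) : Prop :=
  Ind ∅ ∧
  (∀ I J : Set α, I ⊆ J → Ind J → Ind I) ∧
  (∀ I B : Set α, Ind I → ¬ MaximalIn Ind I → MaximalIn Ind B →
    ∃ x ∈ B \ I, Ind (insert x I)) ∧
  SatisfiesIM Ind

/-- The dimaze `(D, B0)` contains an alternating comb: there is an alternating ray
(given by the injective vertex sequence `f` and edge orientations `o`, with
infinitely many vertices of in-degree 2) together with a linkage of all its
in-degree-2 vertices and its first vertex onto a set of exits contained in `B0`,
by disjoint paths meeting the ray exactly at their initial vertices. -/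
def ContainsAltComb (D : V → V → Prop) (B0 : Set V) : Prop :=
  ∃ (f : ℕ → V) (o : ℕ → Bool) (P : Set (DiPath D)),
    Function.Injective f ∧
    (∀ n, if o n then D (f n) (f (n+1)) else D (f (n+1)) (f n)) ∧
    (∀ N, ∃ k ≥ N, o k = true ∧ o (k+1) = false) ∧
    IsLinkage D B0 P ∧
    Ini P = insert (f 0) {v | ∃ k, o k = true ∧ o (k+1) = false ∧ v = f (k+1)} ∧
    (∀ p ∈ P, ∀ v ∈ p.vertSet, v ∈ Set.range f → v = p.first)
/-- The edge relation of the alternating comb given by ray `f`, orientations `o`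
and linking paths `P`. -/
def CombAdj (D : V → V → Prop) (f : ℕ → V) (o : ℕ → Bool) (P : Set (DiPath D))
    (a b : V) : Prop :=
  (∃ n, (o n = true ∧ a = f n ∧ b = f (n+1)) ∨ (o n = false ∧ a = f (n+1) ∧ b = f n)) ∨
  (a, b) ∈ LinkEdges P

/-- The vertex set of the alternating comb. -/
def CombVerts (D : V → V → Prop) (f : ℕ → V) (P : Set (DiPath D)) : Set V :=
  Set.range f ∪ LinkVerts P

/-!
The vertices of out-degree 2 on the comb are exactly the sources of the alternating ray. Every
tooth, attached at a sink of the ray or at its first vertex, can be extended backwards along the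
ray in two ways. Prepending the backward run from the next source uses every source exactly once;
adding the exits off the comb as trivial paths, this links the set onto all exits. Prepending
instead the forward run from the previous source again uses every source, but also one vertex
that is not a source: the first vertex of the ray if its first edge points backwards, and the
second one otherwise, because the first vertex keeps its own tooth. So the set lies properly
inside a linkable set.
-/

open Function

namespace List

variable {α : Type*}

theorem rel_of_mem_zip_tail {R : α → α → Prop} {l : List α} (hl : l.IsChain R) {a b : α}
    (h : (a, b) ∈ l.zip l.tail) : R a b := by
  induction l with
  | nil => simp at h
  | cons x xs ih =>
    cases xs with
    | nil => simp at h
    | cons y ys =>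
      rw [isChain_cons_cons] at hl
      simp only [tail_cons, zip_cons_cons, mem_cons, Prod.mk.injEq] at h
      rcases h with ⟨rfl, rfl⟩ | h
      · exact hl.1
      · exact ih hl.2 h

theorem eq_of_mem_zip_tail_of_nodup {l : List α} (hl : l.Nodup) {a b c : α}
    (hb : (a, b) ∈ l.zip l.tail) (hc : (a, c) ∈ l.zip l.tail) : b = c := by
  induction l with
  | nil => simp at hb
  | cons x xs ih =>
    cases xs with
    | nil => simp at hb
    | cons y ys =>
      have hx : x ∉ y :: ys := (nodup_cons.1 hl).1
      simp only [tail_cons, zip_cons_cons, mem_cons, Prod.mk.injEq] at hb hc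
      rcases hb with ⟨rfl, rfl⟩ | hb <;> rcases hc with ⟨ha, rfl⟩ | hc
      · rfl
      · exact absurd (of_mem_zip hc).1 hx
      · exact absurd (ha ▸ (of_mem_zip hb).1) hx
      · exact ih hl.of_cons hb hc

theorem exists_mem_zip_tail_of_ne_getLast {l : List α} (hl : l ≠ []) {a : α} (ha : a ∈ l)
    (hlast : a ≠ l.getLast hl) : ∃ b, (a, b) ∈ l.zip l.tail := by
  induction l with
  | nil => simp at ha
  | cons x xs ih =>
    cases xs with
    | nil => simp_all
    | cons y ys =>
      rcases mem_cons.1 ha with rfl | ha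
      · exact ⟨y, by simp⟩
      · obtain ⟨b, hb⟩ := ih (cons_ne_nil y ys) ha (by rwa [getLast_cons] at hlast)
        exact ⟨b, mem_cons_of_mem _ hb⟩

end List

namespace DiPath

variable {D : V → V → Prop}

theorem first_mem_vertSet (p : DiPath D) : p.first ∈ p.vertSet := List.head_mem p.ne

theorem last_mem_vertSet (p : DiPath D) : p.last ∈ p.vertSet := List.getLast_mem p.ne

theorem first_cons_tail (p : DiPath D) : p.first :: p.verts.tail = p.verts :=
  List.cons_head_tail p.ne

theorem first_notMem_tail (p : DiPath D) : p.first ∉ p.verts.tail := by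
  have h := p.nodup
  rw [← p.first_cons_tail] at h
  exact (List.nodup_cons.1 h).1

theorem rel_of_mem_edgeSet {p : DiPath D} {a b : V} (h : (a, b) ∈ p.edgeSet) : D a b :=
  List.rel_of_mem_zip_tail p.chain h

theorem mem_vertSet_of_mem_edgeSet {p : DiPath D} {a b : V} (h : (a, b) ∈ p.edgeSet) :
    a ∈ p.vertSet ∧ b ∈ p.vertSet :=
  ⟨(List.of_mem_zip h).1, List.mem_of_mem_tail (List.of_mem_zip h).2⟩

theorem eq_of_mem_edgeSet {p : DiPath D} {a b c : V} (hb : (a, b) ∈ p.edgeSet)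
    (hc : (a, c) ∈ p.edgeSet) : b = c :=
  List.eq_of_mem_zip_tail_of_nodup p.nodup hb hc

theorem exists_mem_edgeSet_of_ne_last {p : DiPath D} {v : V} (hv : v ∈ p.vertSet)
    (hlast : v ≠ p.last) : ∃ w, (v, w) ∈ p.edgeSet :=
  List.exists_mem_zip_tail_of_ne_getLast p.ne hv hlast

theorem eq_last_of_forall_not_rel {p : DiPath D} {v : V} (hv : v ∈ p.vertSet)
    (hout : ∀ w, ¬ D v w) : v = p.last := by
  by_contra hlast
  obtain ⟨w, hw⟩ := exists_mem_edgeSet_of_ne_last hv hlast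
  exact hout w (rel_of_mem_edgeSet hw)

def single (v : V) : DiPath D :=
  ⟨[v], List.cons_ne_nil v [], List.nodup_singleton v, .singleton v⟩

@[simp] theorem first_single (v : V) : (single v : DiPath D).first = v := rfl

@[simp] theorem last_single (v : V) : (single v : DiPath D).last = v := rfl

@[simp] theorem vertSet_single (v : V) : (single v : DiPath D).vertSet = {v} := by
  ext; simp [vertSet, single]

def reverse (p : DiPath (flip D)) : DiPath D where
  verts := p.verts.reverse
  ne := List.reverse_ne_nil_iff.2 p.ne
  nodup := List.nodup_reverse.2 p.nodup
  chain := List.isChain_reverse.2 p.chain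

@[simp] theorem first_reverse (p : DiPath (flip D)) : p.reverse.first = p.last :=
  List.head_reverse _

@[simp] theorem last_reverse (p : DiPath (flip D)) : p.reverse.last = p.first :=
  List.getLast_reverse _

@[simp] theorem vertSet_reverse (p : DiPath (flip D)) : p.reverse.vertSet = p.vertSet := by
  ext; simp [vertSet, reverse]

def append (p q : DiPath D) (h : p.last = q.first)
    (hpq : ∀ v ∈ p.vertSet, v ∈ q.vertSet → v = q.first) : DiPath D where
  verts := p.verts ++ q.verts.tail
  ne := by simp [p.ne]
  nodup := by
    refine List.nodup_append.2 ⟨p.nodup, q.nodup.sublist (List.tail_sublist _), ?_⟩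
    rintro v hv _ hw rfl
    exact q.first_notMem_tail (hpq v hv (List.mem_of_mem_tail hw) ▸ hw)
  chain := by
    have hq : (q.first :: q.verts.tail).IsChain D := q.first_cons_tail ▸ q.chain
    refine List.IsChain.append p.chain hq.tail ?_
    intro x hx y hy
    rw [List.getLast?_eq_some_getLast p.ne, Option.mem_some_iff] at hx
    rw [← hx, show p.verts.getLast p.ne = q.first from h]
    exact List.isChain_cons.1 hq |>.1 y hy

variable {p q : DiPath D} {h : p.last = q.first}
  {hpq : ∀ v ∈ p.vertSet, v ∈ q.vertSet → v = q.first}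

@[simp] theorem first_append : (p.append q h hpq).first = p.first :=
  List.head_append_of_ne_nil p.ne

@[simp] theorem last_append : (p.append q h hpq).last = q.last := by
  by_cases ht : q.verts.tail = []
  · have hq : q.verts = [q.first] := by rw [← q.first_cons_tail, ht]
    simp only [last, append, ht, List.append_nil]
    rw [show q.verts.getLast q.ne = q.first by simp [hq]]
    exact h
  · simp only [last, append]
    rw [List.getLast_append_of_ne_nil _ ht, List.getLast_tail]

@[simp] theorem vertSet_append : (p.append q h hpq).vertSet = p.vertSet ∪ q.vertSet := by
  ext v
  simp only [vertSet, append, Set.mem_ofPred_eq, Set.mem_union, List.mem_append]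
  rw [← q.first_cons_tail, List.mem_cons]
  constructor
  · rintro (hv | hv)
    · exact Or.inl hv
    · exact Or.inr (Or.inr hv)
  · rintro (hv | rfl | hv)
    · exact Or.inl hv
    · exact Or.inl (h ▸ p.last_mem_vertSet)
    · exact Or.inr hv

def ofSeq {f : ℕ → V} (hf : Injective f) (a n : ℕ)
    (hD : ∀ i, a ≤ i → i < a + n → D (f i) (f (i + 1))) : DiPath D where
  verts := (List.range' a (n + 1)).map f
  ne := by simp
  nodup := (List.nodup_range' _).map hf
  chain := by
    refine (List.isChain_map f).2 ((List.isChain_range' a (n + 1) 1).imp_of_mem_imp ?_)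
    rintro i j hi hj rfl
    rw [List.mem_range'_1] at hi hj
    exact hD i hi.1 (by omega)

variable {f : ℕ → V} {hf : Injective f} {a n : ℕ}
  {hD : ∀ i, a ≤ i → i < a + n → D (f i) (f (i + 1))}

@[simp] theorem first_ofSeq : (ofSeq hf a n hD).first = f a := by
  simp [first, ofSeq, List.range'_succ]

@[simp] theorem last_ofSeq : (ofSeq hf a n hD).last = f (a + n) := by
  simp [last, ofSeq, List.getLast_map, List.getLast_range']

@[simp] theorem vertSet_ofSeq : (ofSeq hf a n hD).vertSet = f '' Icc a (a + n) := by
  ext v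
  simp only [vertSet, ofSeq, Set.mem_ofPred_eq, List.mem_map, List.mem_range'_1, Set.mem_image,
    Set.mem_Icc]
  constructor <;> rintro ⟨i, hi, rfl⟩ <;> exact ⟨i, by omega, rfl⟩

end DiPath

section Linkage

variable {D : V → V → Prop} {B0 : Set V} {P : Set (DiPath D)}

theorem ini_eq_image_first (P : Set (DiPath D)) : Ini P = DiPath.first '' P := rfl

namespace IsLinkage

theorem eq_of_mem_vertSet (hP : IsLinkage D B0 P) {p q : DiPath D} (hp : p ∈ P) (hq : q ∈ P)
    {v : V} (hvp : v ∈ p.vertSet) (hvq : v ∈ q.vertSet) : p = q := by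
  by_contra hpq
  exact Set.disjoint_left.1 (hP.2 p hp q hq hpq) hvp hvq

theorem eq_of_mem_linkEdges (hP : IsLinkage D B0 P) {v w₁ w₂ : V}
    (h₁ : (v, w₁) ∈ LinkEdges P) (h₂ : (v, w₂) ∈ LinkEdges P) : w₁ = w₂ := by
  simp only [LinkEdges, Set.mem_iUnion] at h₁ h₂
  obtain ⟨p, hp, h₁⟩ := h₁
  obtain ⟨q, hq, h₂⟩ := h₂
  obtain rfl := hP.eq_of_mem_vertSet hp hq (DiPath.mem_vertSet_of_mem_edgeSet h₁).1
    (DiPath.mem_vertSet_of_mem_edgeSet h₂).1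
  exact DiPath.eq_of_mem_edgeSet h₁ h₂

theorem exists_prepend (hP : IsLinkage D B0 P) (R : DiPath D → DiPath D)
    (hlast : ∀ p ∈ P, (R p).last = p.first)
    (hmeet : ∀ p ∈ P, ∀ q ∈ P, ∀ v ∈ (R p).vertSet, v ∈ q.vertSet → v = q.first)
    (hdisj : ∀ p ∈ P, ∀ q ∈ P, p ≠ q → Disjoint (R p).vertSet (R q).vertSet) :
    ∃ Q, IsLinkage D B0 Q ∧ Ini Q = (fun p => (R p).first) '' P ∧ Ter Q = Ter P ∧
      LinkVerts Q ⊆ (⋃ p ∈ P, (R p).vertSet) ∪ LinkVerts P := by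
  let g : P → DiPath D := fun p => (R p).append p (hlast p p.2) (hmeet p p.2 p p.2)
  have hRq : ∀ p ∈ P, ∀ q ∈ P, p ≠ q → Disjoint (R p).vertSet q.vertSet :=
    fun p hp q hq hpq => Set.disjoint_left.2 fun v hv hv' => Set.disjoint_left.1
      (hdisj p hp q hq hpq) hv (hmeet p hp q hq v hv hv' ▸ hlast q hq ▸ (R q).last_mem_vertSet)
  refine ⟨range g, ⟨?_, ?_⟩, ?_, ?_, ?_⟩
  · rintro _ ⟨p, rfl⟩
    simpa [g] using hP.1 p p.2
  · rintro _ ⟨⟨p, hp⟩, rfl⟩ _ ⟨⟨q, hq⟩, rfl⟩ hgpq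
    have hpq : p ≠ q := by rintro rfl; exact hgpq rfl
    simp only [g, DiPath.vertSet_append, Set.disjoint_union_left, Set.disjoint_union_right]
    exact ⟨⟨hdisj p hp q hq hpq, (hRq q hq p hp hpq.symm).symm⟩, hRq p hp q hq hpq,
      hP.2 p hp q hq hpq⟩
  · ext v
    simp [Ini, g]
  · ext v
    simp [Ter, g]
  · intro v hv
    simp only [LinkVerts, Set.mem_union, Set.mem_iUnion, Set.mem_range] at hv ⊢
    obtain ⟨_, ⟨⟨p, hp⟩, rfl⟩, hv⟩ := hv
    rcases (DiPath.vertSet_append ▸ hv : v ∈ (R p).vertSet ∪ p.vertSet) with hv | hv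
    · exact Or.inl ⟨p, hp, hv⟩
    · exact Or.inr ⟨p, hp, hv⟩

theorem exists_union_singletons (hP : IsLinkage D B0 P) {X : Set V} (hXB : X ⊆ B0)
    (hX : Disjoint X (LinkVerts P)) :
    ∃ Q, IsLinkage D B0 Q ∧ Ini Q = Ini P ∪ X ∧ Ter Q = Ter P ∪ X := by
  refine ⟨P ∪ DiPath.single '' X, ⟨?_, ?_⟩, ?_, ?_⟩
  · rintro p (hp | ⟨x, hx, rfl⟩)
    · exact hP.1 p hp
    · exact hXB hx
  · have hsep : ∀ p ∈ P, ∀ x ∈ X, Disjoint p.vertSet (DiPath.single (D := D) x).vertSet :=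
      fun p hp x hx => by
        rw [DiPath.vertSet_single, Set.disjoint_singleton_right]
        exact fun hxp => Set.disjoint_left.1 hX hx (Set.mem_biUnion hp hxp)
    rintro p (hp | ⟨x, hx, rfl⟩) q (hq | ⟨y, hy, rfl⟩) hpq
    · exact hP.2 p hp q hq hpq
    · exact hsep p hp y hy
    · exact (hsep q hq x hx).symm
    · simpa using fun hxy : x = y => hpq (hxy ▸ rfl)
  · ext v
    simp [Ini, or_and_right, exists_or]
  · ext v
    simp [Ter, or_and_right, exists_or]

end IsLinkage

end Linkage

theorem disjoint_image_Icc_of_lt {α : Type*} {f : ℕ → α} (hf : Injective f) {a b c d : ℕ}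
    (h : b < c) : Disjoint (f '' Icc a b) (f '' Icc c d) :=
  (Set.disjoint_image_iff hf).2 <| Set.disjoint_left.2 fun i hi hi' => by
    simp only [Set.mem_Icc] at hi hi'
    omega

/-- The indices where a tooth of the comb is attached to the ray: `0` and the vertices of
in-degree 2. Here `o n = true` means that the ray edge between `f n` and `f (n + 1)` points
forward. -/
def IsToothIdx (o : ℕ → Bool) : ℕ → Prop
  | 0 => True
  | k + 1 => o k = true ∧ o (k + 1) = false

def IsSourceIdx (o : ℕ → Bool) : ℕ → Prop
  | 0 => o 0 = true
  | k + 1 => o k = false ∧ o (k + 1) = true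

section Orientation

variable {o : ℕ → Bool}

theorem IsToothIdx.eq_zero_of_eq_true {t : ℕ} (ht : IsToothIdx o t) (hot : o t = true) :
    t = 0 := by
  cases t with
  | zero => rfl
  | succ k => simp [ht.2] at hot

theorem IsSourceIdx.eq_true {s : ℕ} (hs : IsSourceIdx o s) : o s = true := by
  cases s with
  | zero => exact hs
  | succ k => exact hs.2

theorem exists_isToothIdx_backward_run (i : ℕ) (hi : ∀ k, i = k + 1 → o k = false) :
    ∃ t ≤ i, IsToothIdx o t ∧ ∀ j, t ≤ j → j < i → o j = false := by
  induction i with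
  | zero => exact ⟨0, le_rfl, trivial, fun j _ hj => absurd hj (Nat.not_lt_zero j)⟩
  | succ k ih =>
    have hk := hi k rfl
    by_cases hk' : ∀ m, k = m + 1 → o m = false
    · obtain ⟨t, htk, ht, hrun⟩ := ih hk'
      refine ⟨t, by omega, ht, fun j htj hj => ?_⟩
      rcases Nat.lt_succ_iff_lt_or_eq.1 hj with hj | rfl
      exacts [hrun j htj hj, hk]
    · push Not at hk'
      obtain ⟨m, rfl, hm⟩ := hk'
      refine ⟨m + 1, by omega, ⟨by simpa using hm, hk⟩, fun j hj hj' => ?_⟩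
      obtain rfl : j = m + 1 := by omega
      exact hk

section NextForward

variable (hfwd : ∀ N, ∃ k ≥ N, o k = true)

def nextFwd (t : ℕ) : ℕ := Nat.find (hfwd t)

variable {t i : ℕ}

theorem le_nextFwd : t ≤ nextFwd hfwd t := (Nat.find_spec (hfwd t)).1

theorem nextFwd_spec : o (nextFwd hfwd t) = true := (Nat.find_spec (hfwd t)).2

theorem eq_false_of_lt_nextFwd (hti : t ≤ i) (hi : i < nextFwd hfwd t) : o i = false := by
  simpa [hti] using Nat.find_min (hfwd t) hi

theorem nextFwd_eq {s : ℕ} (hts : t ≤ s) (hs : o s = true)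
    (hrun : ∀ i, t ≤ i → i < s → o i = false) : nextFwd hfwd t = s :=
  (Nat.find_eq_iff _).2
    ⟨⟨hts, hs⟩, fun i hi ⟨hti, hoi⟩ => by simp [hrun i hti hi] at hoi⟩

theorem isSourceIdx_nextFwd (ht : IsToothIdx o t) : IsSourceIdx o (nextFwd hfwd t) := by
  rcases (le_nextFwd hfwd (t := t)).eq_or_lt with h | h
  · have hot := nextFwd_spec hfwd (t := t)
    rw [← h] at hot ⊢
    obtain rfl := ht.eq_zero_of_eq_true hot
    exact hot
  · obtain ⟨k, hk⟩ : ∃ k, nextFwd hfwd t = k + 1 := ⟨nextFwd hfwd t - 1, by omega⟩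
    rw [hk]
    exact ⟨eq_false_of_lt_nextFwd hfwd (t := t) (i := k) (by omega) (by omega),
      hk ▸ nextFwd_spec hfwd⟩

theorem nextFwd_lt {t' : ℕ} (ht' : IsToothIdx o t') (htt' : t < t') : nextFwd hfwd t < t' := by
  obtain ⟨k, rfl⟩ : ∃ k, t' = k + 1 := ⟨t' - 1, by omega⟩
  by_contra! h
  exact absurd ht'.1 (by simp [eq_false_of_lt_nextFwd hfwd (t := t) (i := k) (by omega) (by omega)])

theorem exists_nextFwd_eq {s : ℕ} (hs : IsSourceIdx o s) :
    ∃ t, IsToothIdx o t ∧ nextFwd hfwd t = s := by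
  obtain ⟨t, hts, ht, hrun⟩ := exists_isToothIdx_backward_run s fun k hk => by
    subst hk
    exact hs.1
  exact ⟨t, ht, nextFwd_eq hfwd hts hs.eq_true hrun⟩

end NextForward

/-- The first index of the forward run of the ray ending at `t`, but never `0` unless `t = 0`:
the first vertex of the ray keeps its own tooth. -/
def runStart (o : ℕ → Bool) (t : ℕ) : ℕ :=
  Nat.find (⟨t, id, fun _ hi hit => absurd hit (by omega)⟩ :
    ∃ e, (0 < t → 0 < e) ∧ ∀ i, e ≤ i → i < t → o i = true)

variable {t i e : ℕ}

theorem runStart_le : runStart o t ≤ t :=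
  Nat.find_min' _ ⟨id, fun _ hi hit => absurd hit (by omega)⟩

theorem runStart_spec :
    (0 < t → 0 < runStart o t) ∧ ∀ i, runStart o t ≤ i → i < t → o i = true :=
  Nat.find_spec (p := fun e => (0 < t → 0 < e) ∧ ∀ i, e ≤ i → i < t → o i = true) _

theorem runStart_zero : runStart o 0 = 0 := Nat.le_zero.1 runStart_le

theorem runStart_pos (ht : 0 < t) : 0 < runStart o t := runStart_spec.1 ht

theorem eq_true_of_runStart_le (hi : runStart o t ≤ i) (hit : i < t) : o i = true :=
  runStart_spec.2 i hi hit

theorem runStart_eq (he : 0 < e) (het : e ≤ t) (hrun : ∀ i, e ≤ i → i < t → o i = true)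
    (hstart : e = 1 ∨ o (e - 1) = false) : runStart o t = e := by
  refine le_antisymm (Nat.find_min' _ ⟨fun _ => he, hrun⟩) ?_
  by_contra! h
  rcases hstart with rfl | hstart
  · exact absurd (runStart_pos (o := o) (t := t) (by omega)) (by omega)
  · simp [eq_true_of_runStart_le (o := o) (t := t) (i := e - 1) (by omega) (by omega)] at hstart

theorem lt_runStart {t' : ℕ} (ht : IsToothIdx o t) (htt' : t < t') : t < runStart o t' := by
  by_contra! h
  cases t with
  | zero => exact absurd (runStart_pos (o := o) htt') (by omega)
  | succ k => exact absurd (eq_true_of_runStart_le h htt') (by simp [ht.2])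

theorem exists_runStart_eq (hbwd : ∀ N, ∃ k ≥ N, o k = false) (he : 0 < e)
    (hstart : e = 1 ∨ o (e - 1) = false) (hnext : o (e - 1) = true ∨ o e = true) :
    ∃ t, IsToothIdx o t ∧ runStart o t = e := by
  obtain ⟨t, ⟨het, hot⟩, hmin⟩ :
      ∃ t, (t ≥ e ∧ o t = false) ∧ ∀ i < t, ¬ (i ≥ e ∧ o i = false) :=
    ⟨_, Nat.find_spec (hbwd e), fun _ => Nat.find_min (hbwd e)⟩
  have hrun : ∀ i, e ≤ i → i < t → o i = true := fun i hi hit => by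
    simpa [hi] using hmin i hit
  refine ⟨t, ?_, runStart_eq he het hrun hstart⟩
  obtain ⟨k, rfl⟩ : ∃ k, t = k + 1 := ⟨t - 1, by omega⟩
  refine ⟨?_, hot⟩
  rcases het.eq_or_lt with rfl | h
  · simpa [hot] using hnext
  · exact hrun k (by omega) (by omega)

/-- Every source starts a forward run ending at a tooth; so does the vertex `1` when `o 0`, and
the vertex `0` otherwise. -/
theorem ssubset_image_runStart (hbwd : ∀ N, ∃ k ≥ N, o k = false) :
    {s | IsSourceIdx o s} ⊂ runStart o '' {t | IsToothIdx o t} := by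
  refine Set.ssubset_iff_exists.2 ⟨?_, ?_⟩
  · rintro (_ | k) hs
    · exact ⟨0, trivial, runStart_zero⟩
    · exact exists_runStart_eq hbwd k.succ_pos (Or.inr hs.1) (Or.inr hs.2)
  · cases h0 : o 0
    · exact ⟨0, ⟨0, trivial, runStart_zero⟩, by simp [IsSourceIdx, h0]⟩
    · exact ⟨1, exists_runStart_eq hbwd one_pos (Or.inl rfl) (Or.inl h0),
        by simp [IsSourceIdx, h0]⟩

end Orientation

def RayAdj (f : ℕ → V) (o : ℕ → Bool) (a b : V) : Prop :=
  ∃ n, (o n = true ∧ a = f n ∧ b = f (n+1)) ∨ (o n = false ∧ a = f (n+1) ∧ b = f n)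

section Comb

variable {D : V → V → Prop} {B0 : Set V} {f : ℕ → V} {o : ℕ → Bool} {P : Set (DiPath D)}

theorem mem_range_of_rayAdj {a b : V} (h : RayAdj f o a b) : a ∈ range f := by
  obtain ⟨n, ⟨-, rfl, -⟩ | ⟨-, rfl, -⟩⟩ := h
  exacts [⟨n, rfl⟩, ⟨n + 1, rfl⟩]

theorem rayAdj_apply_iff (hf : Injective f) {i : ℕ} {w : V} :
    RayAdj f o (f i) w ↔
      (o i = true ∧ w = f (i + 1)) ∨ ∃ k, i = k + 1 ∧ o k = false ∧ w = f k := by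
  constructor
  · rintro ⟨n, ⟨hn, hi, rfl⟩ | ⟨hn, hi, rfl⟩⟩
    · obtain rfl := hf hi
      exact Or.inl ⟨hn, rfl⟩
    · obtain rfl := hf hi
      exact Or.inr ⟨n, rfl, hn, rfl⟩
  · rintro (⟨hi, rfl⟩ | ⟨k, rfl, hk, rfl⟩)
    exacts [⟨i, Or.inl ⟨hi, rfl, rfl⟩⟩, ⟨k, Or.inr ⟨hk, rfl, rfl⟩⟩]

theorem ini_eq_image_isToothIdx
    (hini : Ini P = insert (f 0) {v | ∃ k, o k = true ∧ o (k+1) = false ∧ v = f (k+1)}) :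
    Ini P = f '' {t | IsToothIdx o t} := by
  rw [hini]
  ext v
  constructor
  · rintro (rfl | ⟨k, hk, hk', rfl⟩)
    exacts [⟨0, trivial, rfl⟩, ⟨k + 1, ⟨hk, hk'⟩, rfl⟩]
  · rintro ⟨_ | k, ht, rfl⟩
    exacts [Or.inl rfl, Or.inr ⟨k, ht.1, ht.2, rfl⟩]

theorem isToothIdx_of_forall_not_rel
    (hedge : ∀ n, if o n then D (f n) (f (n+1)) else D (f (n+1)) (f n)) {i : ℕ}
    (hout : ∀ w, ¬ D (f i) w) : IsToothIdx o i := by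
  cases i with
  | zero => trivial
  | succ k =>
    constructor
    · cases hk : o k
      · exact absurd (by simpa [hk] using hedge k) (hout _)
      · rfl
    · cases hk : o (k + 1)
      · rfl
      · exact absurd (by simpa [hk] using hedge (k + 1)) (hout _)

theorem isToothIdx_of_mem_linkEdges (hf : Injective f) (hini : Ini P = f '' {t | IsToothIdx o t})
    (hmeet : ∀ p ∈ P, ∀ v ∈ p.vertSet, v ∈ range f → v = p.first) {i : ℕ} {w : V}
    (h : (f i, w) ∈ LinkEdges P) : IsToothIdx o i := by
  simp only [LinkEdges, Set.mem_iUnion] at h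
  obtain ⟨p, hp, h⟩ := h
  have hfirst := hmeet p hp _ (DiPath.mem_vertSet_of_mem_edgeSet h).1 ⟨i, rfl⟩
  exact hf.mem_set_image.1 (by rw [← hini]; exact ⟨p, hp, hfirst.symm⟩)

theorem combAdj_subsingleton (hf : Injective f) (hlink : IsLinkage D B0 P)
    (hini : Ini P = f '' {t | IsToothIdx o t})
    (hmeet : ∀ p ∈ P, ∀ v ∈ p.vertSet, v ∈ range f → v = p.first) {v : V}
    (hv : ∀ s, IsSourceIdx o s → f s ≠ v) : {w | CombAdj D f o P v w}.Subsingleton := by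
  have hmixed : ∀ w₁ w₂, RayAdj f o v w₁ → (v, w₂) ∈ LinkEdges P → False := by
    intro w₁ w₂ h₁ h₂
    obtain ⟨i, rfl⟩ := mem_range_of_rayAdj h₁
    have ht := isToothIdx_of_mem_linkEdges hf hini hmeet h₂
    rcases (rayAdj_apply_iff hf).1 h₁ with ⟨hi, -⟩ | ⟨k, rfl, hk, -⟩
    · obtain rfl := ht.eq_zero_of_eq_true hi
      exact hv 0 hi rfl
    · simp [ht.1] at hk
  rintro w₁ (h₁ | h₁) w₂ (h₂ | h₂)
  · obtain ⟨i, rfl⟩ := mem_range_of_rayAdj h₁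
    replace h₁ := (rayAdj_apply_iff hf).1 h₁
    replace h₂ := (rayAdj_apply_iff hf).1 h₂
    rcases h₁ with ⟨hi, rfl⟩ | ⟨k, rfl, hk, rfl⟩ <;>
      rcases h₂ with ⟨hi', rfl⟩ | ⟨k', hkk', hk', rfl⟩
    · rfl
    · subst hkk'
      exact absurd rfl (hv _ ⟨hk', hi⟩)
    · exact absurd rfl (hv _ ⟨hk, hi'⟩)
    · obtain rfl : k = k' := by omega
      rfl
  · exact (hmixed w₁ w₂ h₁ h₂).elim
  · exact (hmixed w₂ w₁ h₂ h₁).elim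
  · exact hlink.eq_of_mem_linkEdges h₁ h₂

theorem encard_combAdj_of_isSourceIdx (hD : IsDimaze D B0) (hf : Injective f)
    (hedge : ∀ n, if o n then D (f n) (f (n+1)) else D (f (n+1)) (f n))
    (hlink : IsLinkage D B0 P) (hini : Ini P = f '' {t | IsToothIdx o t})
    (hmeet : ∀ p ∈ P, ∀ v ∈ p.vertSet, v ∈ range f → v = p.first) {s : ℕ}
    (hs : IsSourceIdx o s) : {w | CombAdj D f o P (f s) w}.encard = 2 := by
  cases s with
  | zero =>
    replace hs : o 0 = true := hs
    obtain ⟨p, hp, hp0⟩ : f 0 ∈ Ini P := by rw [hini]; exact ⟨0, trivial, rfl⟩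
    have h01 : D (f 0) (f 1) := by simpa [hs] using hedge 0
    obtain ⟨w, hw⟩ := DiPath.exists_mem_edgeSet_of_ne_last (hp0 ▸ p.first_mem_vertSet)
      fun h => hD _ (by rw [h]; exact hlink.1 p hp) _ h01
    have hw' : (f 0, w) ∈ LinkEdges P := Set.mem_biUnion hp hw
    have hout : {w' | CombAdj D f o P (f 0) w'} = {f 1, w} := by
      ext w'
      constructor
      · rintro (h | h)
        · rcases (rayAdj_apply_iff hf).1 h with ⟨-, rfl⟩ | ⟨k, hk, -⟩
          · exact Or.inl rfl
          · omega
        · exact Or.inr (hlink.eq_of_mem_linkEdges h hw')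
      · rintro (rfl | rfl)
        · exact Or.inl ((rayAdj_apply_iff hf).2 (Or.inl ⟨hs, rfl⟩))
        · exact Or.inr hw'
    rw [hout, Set.encard_pair]
    -- `w` lies on the tooth at `f 0`, which meets the ray only in `f 0`
    intro h1w
    have := hmeet p hp w (DiPath.mem_vertSet_of_mem_edgeSet hw).2 ⟨1, h1w⟩
    exact one_ne_zero (hf (h1w.trans (this.trans hp0)))
  | succ k =>
    have hout : {w' | CombAdj D f o P (f (k + 1)) w'} = {f (k + 2), f k} := by
      ext w'
      constructor
      · rintro (h | h)
        · rcases (rayAdj_apply_iff hf).1 h with ⟨-, rfl⟩ | ⟨k', hk', -, rfl⟩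
          · exact Or.inl rfl
          · obtain rfl : k = k' := by omega
            exact Or.inr rfl
        · exact absurd (isToothIdx_of_mem_linkEdges hf hini hmeet h).2 (by simp [hs.2])
      · rintro (rfl | rfl)
        · exact Or.inl ((rayAdj_apply_iff hf).2 (Or.inl ⟨hs.2, rfl⟩))
        · exact Or.inl ((rayAdj_apply_iff hf).2 (Or.inr ⟨k, rfl, hs.1, rfl⟩))
    exact hout ▸ Set.encard_pair fun h => by have := hf h; omega

theorem setOf_encard_combAdj_eq_two (hD : IsDimaze D B0) (hf : Injective f)
    (hedge : ∀ n, if o n then D (f n) (f (n+1)) else D (f (n+1)) (f n))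
    (hlink : IsLinkage D B0 P) (hini : Ini P = f '' {t | IsToothIdx o t})
    (hmeet : ∀ p ∈ P, ∀ v ∈ p.vertSet, v ∈ range f → v = p.first) :
    {v | v ∈ CombVerts D f P ∧ {w | CombAdj D f o P v w}.encard = 2} =
      f '' {s | IsSourceIdx o s} := by
  ext v
  constructor
  · rintro ⟨-, hv⟩
    by_contra hvs
    have := Set.encard_le_one_iff_subsingleton.2
      (combAdj_subsingleton hf hlink hini hmeet fun s hs hsv => hvs ⟨s, hs, hsv⟩)
    rw [hv] at this
    norm_num at this
  · rintro ⟨s, hs, rfl⟩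
    exact ⟨Or.inl ⟨s, rfl⟩, encard_combAdj_of_isSourceIdx hD hf hedge hlink hini hmeet hs⟩

theorem ter_union_diff_combVerts (hD : IsDimaze D B0)
    (hedge : ∀ n, if o n then D (f n) (f (n+1)) else D (f (n+1)) (f n))
    (hlink : IsLinkage D B0 P) (hini : Ini P = f '' {t | IsToothIdx o t}) :
    Ter P ∪ (B0 \ CombVerts D f P) = B0 := by
  refine (Set.union_subset ?_ sdiff_subset).antisymm fun v hvB => ?_
  · rintro _ ⟨p, hp, rfl⟩
    exact hlink.1 p hp
  by_cases hvC : v ∈ CombVerts D f P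
  · obtain ⟨p, hp, hvp⟩ : ∃ p ∈ P, v ∈ p.vertSet := by
      rcases hvC with ⟨i, rfl⟩ | hv
      · obtain ⟨p, hp, hpi⟩ : f i ∈ Ini P := by
          rw [hini]
          exact ⟨i, isToothIdx_of_forall_not_rel hedge (hD _ hvB), rfl⟩
        exact ⟨p, hp, hpi ▸ p.first_mem_vertSet⟩
      · simpa [LinkVerts] using hv
    exact Or.inl ⟨p, hp, (DiPath.eq_last_of_forall_not_rel hvp (hD v hvB)).symm⟩
  · exact Or.inr ⟨hvB, hvC⟩

theorem exists_linkage_prepend_ray (hf : Injective f) (hlink : IsLinkage D B0 P) {T : Set ℕ}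
    (hini : Ini P = f '' T)
    (hmeet : ∀ p ∈ P, ∀ v ∈ p.vertSet, v ∈ range f → v = p.first) (R : ℕ → DiPath D)
    (hlast : ∀ t ∈ T, (R t).last = f t)
    (hray : ∀ t ∈ T, (R t).vertSet ⊆ range f)
    (hdisj : T.Pairwise fun t t' => Disjoint (R t).vertSet (R t').vertSet) :
    ∃ Q, IsLinkage D B0 Q ∧
      Ini Q = (fun t => (R t).first) '' T ∪ (B0 \ CombVerts D f P) ∧
      Ter Q = Ter P ∪ (B0 \ CombVerts D f P) := by
  have hidx : ∀ p ∈ P, invFun f p.first ∈ T ∧ f (invFun f p.first) = p.first := by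
    intro p hp
    obtain ⟨t, ht, hft⟩ : p.first ∈ f '' T := hini ▸ ⟨p, hp, rfl⟩
    rw [← hft, leftInverse_invFun hf t]
    exact ⟨ht, rfl⟩
  obtain ⟨Q, hQ, hQini, hQter, hQverts⟩ := hlink.exists_prepend (fun p => R (invFun f p.first))
    (fun p hp => (hlast _ (hidx p hp).1).trans (hidx p hp).2)
    (fun p hp q hq v hv hvq => hmeet q hq v hvq (hray _ (hidx p hp).1 hv))
    (fun p hp q hq hpq => hdisj (hidx p hp).1 (hidx q hq).1 fun h => hpq <|
      hlink.eq_of_mem_vertSet hp hq p.first_mem_vertSet <| by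
        rw [← (hidx p hp).2, h, (hidx q hq).2]
        exact q.first_mem_vertSet)
  have hQC : LinkVerts Q ⊆ CombVerts D f P := by
    refine hQverts.trans (Set.union_subset_union_left _ ?_)
    simp only [Set.iUnion_subset_iff]
    exact fun p hp => hray _ (hidx p hp).1
  obtain ⟨Q', hQ', hQ'ini, hQ'ter⟩ := hQ.exists_union_singletons sdiff_subset
    (Set.disjoint_left.2 fun v hv hvQ => hv.2 (hQC hvQ))
  refine ⟨Q', hQ', ?_, by rw [hQ'ter, hQter]⟩
  rw [hQ'ini, hQini]
  congr 1
  calc (fun p : DiPath D => (R (invFun f p.first)).first) '' P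
      = (fun t => (R t).first) '' (invFun f '' Ini P) := by
        rw [ini_eq_image_first, Set.image_image, Set.image_image]
    _ = (fun t => (R t).first) '' T := by rw [hini, (leftInverse_invFun hf).image_image]

theorem linkableOnto_image_isSourceIdx (hD : IsDimaze D B0) (hf : Injective f)
    (hedge : ∀ n, if o n then D (f n) (f (n+1)) else D (f (n+1)) (f n))
    (hfwd : ∀ N, ∃ k ≥ N, o k = true) (hlink : IsLinkage D B0 P)
    (hini : Ini P = f '' {t | IsToothIdx o t})
    (hmeet : ∀ p ∈ P, ∀ v ∈ p.vertSet, v ∈ range f → v = p.first) :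
    LinkableOnto D B0 (f '' {s | IsSourceIdx o s} ∪ (B0 \ CombVerts D f P)) := by
  let R (t : ℕ) : DiPath D :=
    (DiPath.ofSeq (D := flip D) hf t (nextFwd hfwd t - t) fun i hti hi => by
      simpa [flip, eq_false_of_lt_nextFwd hfwd hti (by omega)] using hedge i).reverse
  have hR : ∀ t, (R t).vertSet = f '' Icc t (nextFwd hfwd t) ∧
      (R t).first = f (nextFwd hfwd t) ∧ (R t).last = f t := fun t => by
    simp [R, Nat.add_sub_cancel' (le_nextFwd hfwd)]
  have hdisj : {t | IsToothIdx o t}.Pairwise fun t t' => Disjoint (R t).vertSet (R t').vertSet := by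
    intro t ht t' ht' htt'
    rw [(hR t).1, (hR t').1]
    rcases htt'.lt_or_gt with h | h
    · exact disjoint_image_Icc_of_lt hf (nextFwd_lt hfwd ht' h)
    · exact (disjoint_image_Icc_of_lt hf (nextFwd_lt hfwd ht h)).symm
  obtain ⟨Q, hQ, hQini, hQter⟩ := exists_linkage_prepend_ray hf hlink hini hmeet R
    (fun t _ => (hR t).2.2) (fun t _ => (hR t).1 ▸ Set.image_subset_range _ _) hdisj
  refine ⟨Q, hQ, ?_, hQter.trans (ter_union_diff_combVerts hD hedge hlink hini)⟩
  rw [hQini, funext fun t => (hR t).2.1, ← Set.image_image f (nextFwd hfwd)]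
  congr 2
  ext s
  constructor
  · rintro ⟨t, ht, rfl⟩
    exact isSourceIdx_nextFwd hfwd ht
  · exact exists_nextFwd_eq hfwd

theorem exists_linkable_ssuperset (hf : Injective f)
    (hedge : ∀ n, if o n then D (f n) (f (n+1)) else D (f (n+1)) (f n))
    (hbwd : ∀ N, ∃ k ≥ N, o k = false) (hlink : IsLinkage D B0 P)
    (hini : Ini P = f '' {t | IsToothIdx o t})
    (hmeet : ∀ p ∈ P, ∀ v ∈ p.vertSet, v ∈ range f → v = p.first) :
    ∃ J, Linkable D B0 J ∧ f '' {s | IsSourceIdx o s} ∪ (B0 \ CombVerts D f P) ⊂ J := by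
  let R (t : ℕ) : DiPath D :=
    DiPath.ofSeq hf (runStart o t) (t - runStart o t) fun i hi hit => by
      simpa [eq_true_of_runStart_le hi (by omega)] using hedge i
  have hR : ∀ t, (R t).vertSet = f '' Icc (runStart o t) t ∧ (R t).first = f (runStart o t) ∧
      (R t).last = f t := fun t => by
    simp [R, Nat.add_sub_cancel' runStart_le]
  have hdisj : {t | IsToothIdx o t}.Pairwise fun t t' => Disjoint (R t).vertSet (R t').vertSet := by
    intro t ht t' ht' htt'
    rw [(hR t).1, (hR t').1]
    rcases htt'.lt_or_gt with h | h
    · exact disjoint_image_Icc_of_lt hf (lt_runStart ht h)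
    · exact (disjoint_image_Icc_of_lt hf (lt_runStart ht' h)).symm
  obtain ⟨Q, hQ, hQini, -⟩ := exists_linkage_prepend_ray hf hlink hini hmeet R
    (fun t _ => (hR t).2.2) (fun t _ => (hR t).1 ▸ Set.image_subset_range _ _) hdisj
  refine ⟨Ini Q, ⟨Q, hQ, rfl⟩, ?_⟩
  rw [hQini, funext fun t => (hR t).2.1, ← Set.image_image f (runStart o)]
  obtain ⟨hsub, x, hx, hxS⟩ :=
    Set.ssubset_iff_exists.1 (hf.image_strictMono (ssubset_image_runStart hbwd))
  refine Set.ssubset_iff_exists.2 ⟨Set.union_subset_union_left _ hsub, x, Or.inl hx, ?_⟩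
  rintro (h | h)
  exacts [hxS h, h.2 (Or.inl (Set.image_subset_range _ _ hx))]

end Comb

/-- If a dimaze contains an alternating comb, then the vertices of out-degree 2 on
the comb together with the exits off the comb form a set that is linkable onto the
exits but is not maximally linkable. -/
theorem comb_gives_nonmaximal_onto (D : V → V → Prop) (B0 : Set V)
    (hD : IsDimaze D B0) (f : ℕ → V) (o : ℕ → Bool) (P : Set (DiPath D))
    (hinj : Function.Injective f)
    (hedge : ∀ n, if o n then D (f n) (f (n+1)) else D (f (n+1)) (f n))
    (halt : ∀ N, ∃ k ≥ N, o k = true ∧ o (k+1) = false)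
    (hlink : IsLinkage D B0 P)
    (hini : Ini P = insert (f 0) {v | ∃ k, o k = true ∧ o (k+1) = false ∧ v = f (k+1)})
    (hmeet : ∀ p ∈ P, ∀ v ∈ p.vertSet, v ∈ Set.range f → v = p.first) :
    LinkableOnto D B0
      ({v | v ∈ CombVerts D f P ∧ {w | CombAdj D f o P v w}.encard = 2} ∪
        (B0 \ CombVerts D f P)) ∧
    ¬ MaximalIn (Linkable D B0)
      ({v | v ∈ CombVerts D f P ∧ {w | CombAdj D f o P v w}.encard = 2} ∪
        (B0 \ CombVerts D f P)) := by
  replace hini := ini_eq_image_isToothIdx hini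
  have hfwd : ∀ N, ∃ k ≥ N, o k = true := fun N =>
    let ⟨k, hk, hok, _⟩ := halt N
    ⟨k, hk, hok⟩
  have hbwd : ∀ N, ∃ k ≥ N, o k = false := fun N =>
    let ⟨k, hk, _, hok⟩ := halt N
    ⟨k + 1, by omega, hok⟩
  rw [setOf_encard_combAdj_eq_two hD hinj hedge hlink hini hmeet]
  refine ⟨linkableOnto_image_isSourceIdx hD hinj hedge hfwd hlink hini hmeet, fun hmax => ?_⟩
  obtain ⟨J, hJ, hssub⟩ := exists_linkable_ssuperset hinj hedge hbwd hlink hini hmeet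
  exact hssub.ne (hmax.2 J hJ hssub.subset).symm
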